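/- arXiv:2009.00279 — 5 statements merged into one kernel-verified Lean document; each statement's English description precedes it below -/
import Mathlib

section
/- Let G be a finitely generated group with subgroups N and H such that H normalizes N, G = NH, and N ∩ H is normally finitely generated as a subgroup of H (i.e., it is the normal closure in H of a finite set). Let φ : H → Aut(N) be the conjugation action. Then there exists a finite subset S ⊆ N such that the set φ(H)(S) = {φ(h)(s) : h ∈ H, s ∈ S} generates N. -/
/-!
Choose generators `f = n_f h_f` of `G` with `n_f ∈ N`, `h_f ∈ H`, and let `S` consist of the
`n_f` together with the finitely many normal generators `T` of `N ∩ H` in `H`. The subgroup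
`K ≤ N` generated by the `H`-conjugates of `S` is normalized by `H`, so `KH` is a subgroup; it
contains every `f`, hence `KH = G`. Since `N ∩ H` is the normal closure of `T` in `H` and
`K ∩ H` is normal in `H`, we get `N ∩ H ≤ K`, and Dedekind's rule `N = K(N ∩ H)` gives
`N = K`.
-/

open scoped Pointwise

namespace Subgroup

variable {G : Type*} [Group G]

def conjugatesBy (H : Subgroup G) (S : Set G) : Set G :=
  {x | ∃ h ∈ H, ∃ s ∈ S, x = h * s * h⁻¹}

variable {H N K : Subgroup G} {S : Set G}

theorem subset_conjugatesBy : S ⊆ conjugatesBy H S :=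
  fun s hs => ⟨1, one_mem H, s, hs, by simp⟩

theorem le_normalizer_conjugatesBy : H ≤ normalizer (conjugatesBy H S) := by
  rw [le_set_normalizer_iff]
  rintro h hh _ ⟨h', hh', s, hs, rfl⟩
  exact ⟨h * h', mul_mem hh hh', s, hs, by group⟩

theorem le_normalizer_closure_conjugatesBy : H ≤ normalizer (closure (conjugatesBy H S)) :=
  le_normalizer_conjugatesBy.trans (normalizer_le_normalizer_closure _)

theorem closure_conjugatesBy_le (hSN : S ⊆ N) (hH : H ≤ normalizer (N : Set G)) :
    closure (conjugatesBy H S) ≤ N := by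
  rw [closure_le]
  rintro _ ⟨h, hh, s, hs, rfl⟩
  exact (hH hh s).mp (hSN hs)

theorem inf_le_of_normalClosure_eq {T : Set H} (hT : normalClosure T = N.subgroupOf H)
    (hTK : ∀ t ∈ T, (t : G) ∈ K) (hH : H ≤ normalizer (K : Set G)) : N ⊓ H ≤ K := by
  rintro x ⟨hxN, hxH⟩
  have hx : (⟨x, hxH⟩ : H) ∈ normalClosure T := hT ▸ hxN
  have := normal_subgroupOf_of_le_normalizer hH
  exact normalClosure_le_normal (N := K.subgroupOf H) hTK hx

theorem le_of_inf_le_of_sup_eq_top (hKN : K ≤ N) (hH : H ≤ normalizer (K : Set G))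
    (htop : K ⊔ H = ⊤) (hNH : N ⊓ H ≤ K) : N ≤ K := by
  intro m hm
  have hmKH : m ∈ (K : Set G) * (H : Set G) := by
    rw [← coe_mul_of_right_le_normalizer_left K H hH, htop]
    trivial
  obtain ⟨k, hk, x, hx, rfl⟩ := hmKH
  have hxN : x ∈ N := by simpa using mul_mem (inv_mem (hKN hk)) hm
  exact mul_mem hk (hNH ⟨hxN, hx⟩)

end Subgroup

open Subgroup in
/-- Let `G` be finitely generated with subgroups `N, H` such that `H` normalizes `N`,
`G = NH`, and `N ∩ H` is the normal closure in `H` of a finite set. Then there is a finite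
subset `S ⊆ N` such that the set of `H`-conjugates of `S` generates `N`. -/
theorem exists_finite_conjugation_generating_set {G : Type*} [Group G] [Group.FG G]
    (N H : Subgroup G) (hnorm : H ≤ Subgroup.normalizer (N : Set G))
    (hprod : ∀ g : G, ∃ n ∈ N, ∃ h ∈ H, g = n * h)
    (hfn : ∃ T : Finset ↥H, Subgroup.normalClosure (T : Set ↥H) = N.subgroupOf H) :
    ∃ S : Finset G, (S : Set G) ⊆ N ∧
      Subgroup.closure {x : G | ∃ h ∈ H, ∃ s ∈ S, x = h * s * h⁻¹} = N := by
  classical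
  obtain ⟨T, hT⟩ := hfn
  obtain ⟨F, hF⟩ := Group.FG.out (G := G)
  choose n hnN h hH heq using hprod
  let S : Finset G := F.image n ∪ T.image (↑)
  let K := closure (conjugatesBy H S)
  have hSN : (S : Set G) ⊆ N := by
    simp only [S, Finset.coe_union, Finset.coe_image, Set.union_subset_iff, Set.image_subset_iff]
    exact ⟨fun f _ => hnN f,
      fun t ht => (hT ▸ subset_normalClosure ht : t ∈ N.subgroupOf H)⟩
  have hSK : (S : Set G) ⊆ K := subset_conjugatesBy.trans subset_closure
  have hKH : K ⊔ H = ⊤ := by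
    rw [eq_top_iff, ← hF, closure_le]
    intro f hf
    rw [heq f]
    exact mul_mem (mem_sup_left (hSK (Finset.mem_union_left _ (Finset.mem_image_of_mem n hf))))
      (mem_sup_right (hH f))
  have hKN : K ≤ N := closure_conjugatesBy_le hSN hnorm
  have hHK : H ≤ normalizer (K : Set G) := le_normalizer_closure_conjugatesBy
  have hNH : N ⊓ H ≤ K := inf_le_of_normalClosure_eq hT
    (fun t ht => hSK (Finset.mem_union_right _ (Finset.mem_image_of_mem _ ht))) hHK
  exact ⟨S, hSN, le_antisymm hKN (le_of_inf_le_of_sup_eq_top hKN hHK hKH hNH)⟩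
end

section
/- Let N ≤ H ≤ G be groups with N normal in H, and suppose the triple (G,H,N) has the Cohen–Lyndon property: there is a set T of left coset representatives of H⟪N⟫ in G (where ⟪N⟫ is the normal closure of N in G) such that ⟪N⟫ is the free product of the subgroups tNt⁻¹ for t ∈ T. Then there is a surjective group homomorphism from ⟪N⟫/[G,⟪N⟫] onto N/[H,N]. -/
/-!
The free product decomposition `⟪N⟫ = ∗_{t ∈ T} tNt⁻¹` lets us define `ψ : ⟪N⟫ → N/[H,N]` by
`tnt⁻¹ ↦ [n]` on each factor. Writing an arbitrary `g ∈ G` as `g = thw` with `t ∈ T`, `h ∈ H`,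
`w ∈ ⟪N⟫`, the element `gng⁻¹` is a `⟪N⟫`-conjugate of `t(hnh⁻¹)t⁻¹`; as the target is abelian and
`[hnh⁻¹] = [n]`, we get `ψ(gng⁻¹) = [n]` for every `g`. Hence `ψ` is invariant under conjugation by
`G`, so it kills `[G,⟪N⟫]`, and it is onto because `ψ(n) = [n]`.
-/

open Subgroup commutatorElement

section ConjugationInvariance

variable {G A : Type*} [Group G] [Group A]

theorem Subgroup.commutator_subgroupOf_le_ker {K : Subgroup G} [K.Normal]
    (ψ : K →* A) (hψ : ∀ (g : G) (k : K), ψ (MulAut.conjNormal g k) = ψ k) :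
    ⁅(⊤ : Subgroup G), K⁆.subgroupOf K ≤ ψ.ker := by
  have hle : ⁅(⊤ : Subgroup G), K⁆ ≤ ψ.ker.map K.subtype := by
    rw [commutator_le]
    rintro g - k hk
    refine ⟨MulAut.conjNormal g ⟨k, hk⟩ * (⟨k, hk⟩ : K)⁻¹, by simp [hψ], ?_⟩
    simp [MulAut.conjNormal_apply, commutatorElement_def]
  intro x hx
  obtain ⟨y, hy, hyx⟩ := hle (mem_subgroupOf.mp hx)
  rwa [Subtype.ext hyx] at hy

theorem Subgroup.apply_conjNormal_eq_of_normalClosure {S : Set G} (ψ : normalClosure S →* A)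
    (hψ : ∀ (g s : G) (hs : s ∈ S),
      ψ (MulAut.conjNormal g ⟨s, subset_normalClosure hs⟩) = ψ ⟨s, subset_normalClosure hs⟩)
    (g : G) (k : normalClosure S) : ψ (MulAut.conjNormal g k) = ψ k := by
  obtain ⟨k, hk⟩ := k
  revert g
  refine closure_induction (k := Group.conjugatesOfSet S)
    (p := fun x hx => ∀ g, ψ (MulAut.conjNormal g ⟨x, hx⟩) = ψ ⟨x, hx⟩) ?_ ?_ ?_ ?_ hk
  · intro x hx g
    obtain ⟨s, hs, hsx⟩ := Group.mem_conjugatesOfSet_iff.mp hx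
    obtain ⟨c, rfl⟩ := isConj_iff.mp hsx
    have hcs : (⟨c * s * c⁻¹, subset_closure hx⟩ : normalClosure S) =
        MulAut.conjNormal c ⟨s, subset_normalClosure hs⟩ :=
      Subtype.ext (by simp [MulAut.conjNormal_apply])
    rw [hcs, ← MulAut.mul_apply, ← map_mul, hψ _ _ hs, hψ _ _ hs]
  · exact fun g => congrArg ψ (map_one _)
  · intro x y hx hy ihx ihy g
    have := congrArg₂ (· * ·) (ihx g) (ihy g)
    rwa [← map_mul, ← map_mul, ← map_mul] at this
  · intro x hx ih g
    have := congrArg (·⁻¹) (ih g)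
    rwa [← map_inv, ← map_inv, ← map_inv] at this

end ConjugationInvariance

theorem exists_monoidHom_of_lift_subtype_injective {G A ι : Type*} [Group G] [Group A]
    {K : ι → Subgroup G} {L : Subgroup G}
    (hinj : Function.Injective (Monoid.CoprodI.lift fun i => (K i).subtype))
    (hrange : (Monoid.CoprodI.lift fun i => (K i).subtype).range = L) (f : ∀ i, K i →* A) :
    ∃ ψ : L →* A, ∀ i (x : K i) (hx : (x : G) ∈ L), ψ ⟨x, hx⟩ = f i x := by
  subst hrange
  refine ⟨(Monoid.CoprodI.lift f).comp (MonoidHom.ofInjective hinj).symm.toMonoidHom,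
    fun i x hx => ?_⟩
  have hx' : (⟨x, hx⟩ : (Monoid.CoprodI.lift fun i => (K i).subtype).range) =
      MonoidHom.ofInjective hinj (Monoid.CoprodI.of x) :=
    Subtype.ext (by simp [MonoidHom.ofInjective_apply])
  simp [hx']

section AbelianQuotient

variable {G : Type*} [Group G] (N : Subgroup G) [N.Normal]

instance : IsMulCommutative (N ⧸ (⁅(⊤ : Subgroup G), N⁆.subgroupOf N)) := by
  refine .of_comm fun a b => ?_
  induction a using QuotientGroup.induction_on with | H x =>
  induction b using QuotientGroup.induction_on with | H y =>
  rw [← QuotientGroup.mk_mul, ← QuotientGroup.mk_mul, QuotientGroup.eq, mem_subgroupOf]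
  have hxy : ((x * y)⁻¹ * (y * x) : N) = ⁅(y : G)⁻¹, (x : G)⁻¹⁆ := by
    simp only [coe_mul, coe_inv, commutatorElement_def]; group
  rw [hxy]
  exact commutator_mem_commutator (mem_top _) (inv_mem x.2)

theorem QuotientGroup.mk'_conjNormal (g : G) (n : N) :
    QuotientGroup.mk' (⁅(⊤ : Subgroup G), N⁆.subgroupOf N) (MulAut.conjNormal g n) =
      QuotientGroup.mk' _ n := by
  rw [QuotientGroup.mk'_apply, QuotientGroup.mk'_apply, QuotientGroup.eq, mem_subgroupOf]
  have hgn : (((MulAut.conjNormal g n)⁻¹ * n : N) : G) = ⁅g, (n : G)⁻¹⁆ := by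
    simp only [coe_mul, coe_inv, MulAut.conjNormal_apply, commutatorElement_def]; group
  rw [hgn]
  exact commutator_mem_commutator (mem_top g) (inv_mem n.2)

end AbelianQuotient

namespace CohenLyndon

open scoped Pointwise

variable {G : Type*} [Group G] {H : Subgroup G} (N : Subgroup H)

def inclNormalClosure : N →* normalClosure ((N.map H.subtype : Subgroup G) : Set G) :=
  (H.subtype.comp N.subtype).codRestrict _ fun n => subset_normalClosure (mem_map_of_mem _ n.2)

@[simp]
theorem coe_inclNormalClosure (n : N) : (inclNormalClosure N n : G) = n := rfl

noncomputable def equivConjMap (t : G) :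
    N ≃* (N.map H.subtype).map (MulAut.conj t).toMonoidHom :=
  (N.equivMapOfInjective H.subtype H.subtype_injective).trans ((MulAut.conj t).subgroupMap _)

variable [N.Normal] {A : Type*} [Group A] [IsMulCommutative A]

theorem apply_conjNormal_inclNormalClosure {T : Set G}
    (hT : ∀ g : G, ∃ t ∈ T, t⁻¹ * g ∈ H ⊔ normalClosure ((N.map H.subtype : Subgroup G) : Set G))
    (ψ : normalClosure ((N.map H.subtype : Subgroup G) : Set G) →* A) (f : N →* A)
    (hf : ∀ (h : H) (n : N), f (MulAut.conjNormal h n) = f n)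
    (hψ : ∀ t ∈ T, ∀ n : N, ψ (MulAut.conjNormal t (inclNormalClosure N n)) = f n)
    (g : G) (n : N) : ψ (MulAut.conjNormal g (inclNormalClosure N n)) = f n := by
  obtain ⟨t, ht, htg⟩ := hT g
  obtain ⟨h, hh, w, hw, hhw⟩ : t⁻¹ * g ∈ (H : Set G) *
      (normalClosure ((N.map H.subtype : Subgroup G) : Set G) : Set G) := by
    rw [← mul_normal]; exact htg
  set w' : normalClosure ((N.map H.subtype : Subgroup G) : Set G) :=
    MulAut.conjNormal (t * h) ⟨w, hw⟩
  have hg : MulAut.conjNormal g (inclNormalClosure N n) =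
      w' * MulAut.conjNormal t (inclNormalClosure N (MulAut.conjNormal ⟨h, hh⟩ n)) * w'⁻¹ := by
    obtain rfl : g = t * (h * w) := by rw [show h * w = t⁻¹ * g from hhw]; group
    ext
    simp only [coe_mul, coe_inv, MulAut.conjNormal_apply, coe_inclNormalClosure, w']
    group
  rw [hg, map_mul, map_mul, map_inv, mul_comm' (ψ w'), mul_inv_cancel_right, hψ t ht, hf]

end CohenLyndon

open CohenLyndon

/-- Cohen–Lyndon property: suppose `N ⊴ H ≤ G`, and there is a set `T` of left coset
representatives of `H⟪N⟫` in `G` such that the normal closure `⟪N⟫` of `N` in `G` is the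
internal free product of the conjugates `tNt⁻¹`, `t ∈ T`. Then there is a surjective
homomorphism `⟪N⟫/[G,⟪N⟫] → N/[H,N]`. -/
theorem surjective_of_cohenLyndon {G : Type*} [Group G] (H : Subgroup G)
    (N : Subgroup ↥H) [N.Normal]
    (T : Set G)
    (htrans : ∀ g : G, ∃! t : ↥T,
      (t : G)⁻¹ * g ∈ H ⊔ Subgroup.normalClosure ((Subgroup.map H.subtype N : Subgroup G) : Set G))
    (hinj : Function.Injective
      (Monoid.CoprodI.lift (fun t : ↥T =>
        (Subgroup.map (MulAut.conj (t : G)).toMonoidHom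
          (Subgroup.map H.subtype N)).subtype)))
    (hrange : (Monoid.CoprodI.lift (fun t : ↥T =>
        (Subgroup.map (MulAut.conj (t : G)).toMonoidHom
          (Subgroup.map H.subtype N)).subtype)).range
      = Subgroup.normalClosure ((Subgroup.map H.subtype N : Subgroup G) : Set G)) :
    ∃ φ : (↥(Subgroup.normalClosure ((Subgroup.map H.subtype N : Subgroup G) : Set G)) ⧸
        ((⁅(⊤ : Subgroup G),
            Subgroup.normalClosure ((Subgroup.map H.subtype N : Subgroup G) : Set G)⁆).subgroupOf
          (Subgroup.normalClosure ((Subgroup.map H.subtype N : Subgroup G) : Set G)))) →*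
      (↥N ⧸ ((⁅(⊤ : Subgroup ↥H), N⁆).subgroupOf N)),
      Function.Surjective φ := by
  obtain ⟨ψ, hψ⟩ := exists_monoidHom_of_lift_subtype_injective hinj hrange
    fun t => (QuotientGroup.mk' (⁅(⊤ : Subgroup H), N⁆.subgroupOf N)).comp
      (equivConjMap N t).symm.toMonoidHom
  have hψN := apply_conjNormal_inclNormalClosure N
    (fun g => let ⟨t, ht⟩ := (htrans g).exists; ⟨t, t.2, ht⟩) ψ _ (QuotientGroup.mk'_conjNormal N)
    fun t ht n =>
      (hψ ⟨t, ht⟩ (equivConjMap N t n) (MulAut.conjNormal t (inclNormalClosure N n)).2).trans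
        (congrArg (QuotientGroup.mk' _) ((equivConjMap N t).symm_apply_apply n))
  refine ⟨QuotientGroup.lift _ ψ (commutator_subgroupOf_le_ker ψ
      (apply_conjNormal_eq_of_normalClosure ψ ?_)),
    QuotientGroup.lift_surjective_of_surjective _ _ ?_ _⟩
  · rintro g - ⟨n, hn, rfl⟩
    have h1 := hψN 1 ⟨n, hn⟩
    rw [map_one, MulAut.one_apply] at h1
    exact (hψN g ⟨n, hn⟩).trans h1.symm
  · intro q
    obtain ⟨n, rfl⟩ := QuotientGroup.mk'_surjective _ q
    exact ⟨_, hψN 1 n⟩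
end

section
/- With the same hypotheses (the triple (G,H,N) has the Cohen–Lyndon property), the natural homomorphism ⟪N⟫/[G,⟪N⟫] → N/[H,N] defined on each free factor tNt⁻¹ by tnt⁻¹ ↦ n·[H,N] is an isomorphism, with inverse induced by the inclusion N → ⟪N⟫. -/
/-!
Through the free-product decomposition `⟪N⟫ ≅ ∗_{t ∈ T} tNt⁻¹`, send `tnt⁻¹ ↦ n [H,N]` on each
factor. Any `g ∈ G` factors as `g = t h u` with `t ∈ T`, `h ∈ H`, `u ∈ ⟪N⟫`; since `N/[H,N]` is
abelian and `H` acts trivially on it, the resulting map `⟪N⟫ → N/[H,N]` sends every conjugate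
`gng⁻¹` to `n [H,N]`. It is therefore invariant under conjugation by `G`, so it factors through
`⟪N⟫/[G,⟪N⟫]`, and on the generating conjugates `gng⁻¹` it is inverted by the map induced by the
inclusion `N → ⟪N⟫`.
-/

namespace Subgroup

variable {P : Type*} [Group P]

theorem mk_eq_mk_of_isConj (K : Subgroup P) {k k' : K} (h : IsConj (k : P) k') :
    (k : K ⧸ (⁅(⊤ : Subgroup P), K⁆).subgroupOf K) = k' := by
  obtain ⟨g, hg⟩ := isConj_iff.mp h
  rw [QuotientGroup.eq, mem_subgroupOf, commutator_comm]
  convert commutator_mem_commutator (inv_mem k.2) (mem_top g) using 1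
  rw [coe_mul, coe_inv, commutatorElement_def, ← hg]
  group

instance commGroupQuotientCommutator (K : Subgroup P) [K.Normal] :
    CommGroup (K ⧸ (⁅(⊤ : Subgroup P), K⁆).subgroupOf K) where
  mul_comm a b := by
    induction a using QuotientGroup.induction_on with | H x =>
    induction b using QuotientGroup.induction_on with | H y =>
    exact (K.mk_eq_mk_of_isConj (isConj_iff.mpr ⟨x, by simp [mul_assoc]⟩)).symm

theorem normalClosure_hom_ext {M : Type*} [Monoid M] {s : Set P} {f₁ f₂ : normalClosure s →* M}
    (h : ∀ w : normalClosure s, (w : P) ∈ Group.conjugatesOfSet s → f₁ w = f₂ w) : f₁ = f₂ :=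
  MonoidHom.eq_of_eqOn_dense (closure_closure_coe_preimage (k := Group.conjugatesOfSet s)) h

theorem normalClosure_map_eq_of_isConj {M : Type*} [Monoid M] {s : Set P}
    (φ : normalClosure s →* M)
    (h : ∀ w w' : normalClosure s, (w : P) ∈ s → IsConj (w : P) w' → φ w = φ w')
    {w w' : normalClosure s} (hc : IsConj (w : P) w') : φ w = φ w' := by
  obtain ⟨g, hg⟩ := isConj_iff.mp hc
  have hinv : φ.comp (MulAut.conjNormal g).toMonoidHom = φ := normalClosure_hom_ext fun v hv => by
    obtain ⟨x, hx, hxv⟩ := Group.mem_conjugatesOfSet_iff.mp hv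
    have hgv : IsConj (v : P) (MulAut.conjNormal g v) :=
      isConj_iff.mpr ⟨g, (MulAut.conjNormal_apply g v).symm⟩
    let x' : normalClosure s := ⟨x, subset_normalClosure hx⟩
    rw [MonoidHom.comp_apply, MulEquiv.coe_toMonoidHom, ← h x' _ hx (hxv.trans hgv), h x' _ hx hxv]
  have hw' : MulAut.conjNormal g w = w' := Subtype.ext ((MulAut.conjNormal_apply g w).trans hg)
  rw [← hw', ← hinv, MonoidHom.comp_apply, MulEquiv.coe_toMonoidHom, hinv]

theorem commutator_subgroupOf_le_ker_s10 {M : Type*} [Group M] (K : Subgroup P) [hK : K.Normal]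
    (φ : K →* M) (h : ∀ w w' : K, IsConj (w : P) w' → φ w = φ w') :
    (⁅(⊤ : Subgroup P), K⁆).subgroupOf K ≤ φ.ker := by
  have hle : ⁅(⊤ : Subgroup P), K⁆ ≤ φ.ker.map K.subtype := commutator_le.mpr fun g _ k hk => by
    let k' : K := ⟨g * k * g⁻¹, hK.conj_mem k hk g⟩
    refine ⟨k' * ⟨k, hk⟩⁻¹, ?_, by simp [k', commutatorElement_def]⟩
    rw [SetLike.mem_coe, MonoidHom.mem_ker, map_mul, map_inv,
      ← h ⟨k, hk⟩ k' (isConj_iff.mpr ⟨g, rfl⟩), mul_inv_cancel]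
  exact fun x hx => (mem_map_iff_mem K.subtype_injective).mp (hle (mem_subgroupOf.mp hx))

end Subgroup

open Subgroup

namespace CohenLyndon

variable {G : Type*} [Group G] (H : Subgroup G) (N : Subgroup H)

abbrev ncl : Subgroup G := normalClosure (N.map H.subtype : Set G)

abbrev conjFactor (t : G) : Subgroup G := (N.map H.subtype).map (MulAut.conj t).toMonoidHom

noncomputable def conjFactorEquiv (t : G) : N ≃* conjFactor H N t :=
  (N.equivMapOfInjective H.subtype H.subtype_injective).trans
    ((N.map H.subtype).equivMapOfInjective _ (MulAut.conj t).injective)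

theorem coe_conjFactorEquiv (t : G) (n : N) :
    (conjFactorEquiv H N t n : G) = t * (n : H) * t⁻¹ := rfl

def toNormalClosure : N →* ncl H N :=
  (H.subtype.comp N.subtype).codRestrict _ fun n => subset_normalClosure (mem_map_of_mem _ n.2)

theorem commutator_le_ker_toNormalClosure :
    (⁅(⊤ : Subgroup H), N⁆).subgroupOf N ≤
      ((QuotientGroup.mk' ((⁅(⊤ : Subgroup G), ncl H N⁆).subgroupOf (ncl H N))).comp
        (toNormalClosure H N)).ker := by
  intro n hn
  rw [MonoidHom.mem_ker, MonoidHom.comp_apply, QuotientGroup.mk'_apply,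
    QuotientGroup.eq_one_iff, mem_subgroupOf]
  have hn' := mem_map_of_mem H.subtype (mem_subgroupOf.mp hn)
  rw [map_commutator] at hn'
  exact commutator_mono le_top le_normalClosure hn'

def ofQuotient [N.Normal] : N ⧸ (⁅(⊤ : Subgroup H), N⁆).subgroupOf N →*
    ncl H N ⧸ (⁅(⊤ : Subgroup G), ncl H N⁆).subgroupOf (ncl H N) :=
  QuotientGroup.lift _ _ (commutator_le_ker_toNormalClosure H N)

variable (T : Set G)

abbrev coprodLift : Monoid.CoprodI (fun t : T => conjFactor H N t) →* G :=
  Monoid.CoprodI.lift fun t => (conjFactor H N t).subtype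

variable {H N T} (hinj : Function.Injective (coprodLift H N T))
  (hrange : (coprodLift H N T).range = ncl H N)

noncomputable def coprodEquiv : Monoid.CoprodI (fun t : T => conjFactor H N t) ≃* ncl H N :=
  (MonoidHom.ofInjective hinj).trans (MulEquiv.subgroupCongr hrange)

theorem coe_coprodEquiv_of (t : T) (m : conjFactor H N t) :
    (coprodEquiv hinj hrange (Monoid.CoprodI.of m) : G) = (m : G) := by
  simp [coprodEquiv, MonoidHom.ofInjective_apply]

variable [N.Normal]

noncomputable def toQuotient : ncl H N →* N ⧸ (⁅(⊤ : Subgroup H), N⁆).subgroupOf N :=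
  (Monoid.CoprodI.lift fun t : T =>
      (QuotientGroup.mk' _).comp (conjFactorEquiv H N t).symm.toMonoidHom).comp
    (coprodEquiv hinj hrange).symm.toMonoidHom

theorem toQuotient_conj_of_mem (t : T) (n : N) (x : ncl H N)
    (hx : (x : G) = t * (n : H) * (t : G)⁻¹) :
    toQuotient hinj hrange x = n := by
  have hx' : x = coprodEquiv hinj hrange (Monoid.CoprodI.of (conjFactorEquiv H N t n)) :=
    Subtype.ext (by rw [coe_coprodEquiv_of, coe_conjFactorEquiv, hx])
  simp [toQuotient, hx']

theorem toQuotient_conj (hT : ∀ g : G, ∃ t : T, (t : G)⁻¹ * g ∈ H ⊔ ncl H N)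
    (g : G) (n : N) (x : ncl H N) (hx : (x : G) = g * (n : H) * g⁻¹) :
    toQuotient hinj hrange x = n := by
  obtain ⟨t, ht⟩ := hT g
  rw [← SetLike.mem_coe, mul_normal] at ht
  obtain ⟨h, hh, u, hu, hhu : h * u = (t : G)⁻¹ * g⟩ := ht
  let h' : H := ⟨h, hh⟩
  let n' : N := ⟨h' * n * h'⁻¹, ‹N.Normal›.conj_mem n n.2 h'⟩
  have hWn : (ncl H N).Normal := normalClosure_normal
  let v : ncl H N := ⟨t * (h * u * h⁻¹) * (t : G)⁻¹, hWn.conj_mem _ (hWn.conj_mem u hu h) t⟩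
  let y : ncl H N :=
    ⟨t * (n' : H) * (t : G)⁻¹, hWn.conj_mem _ (subset_normalClosure (mem_map_of_mem _ n'.2)) t⟩
  have hxvy : x = v * y * v⁻¹ := by
    have hg : g = t * (h * u) := by rw [hhu, mul_inv_cancel_left]
    ext
    simp only [hx, hg, v, y, n', h', coe_mul, coe_inv]
    group
  calc toQuotient hinj hrange x = toQuotient hinj hrange y := by
        rw [hxvy, map_mul, map_mul, map_inv, mul_inv_cancel_comm]
    _ = (n' : N ⧸ (⁅(⊤ : Subgroup H), N⁆).subgroupOf N) :=
        toQuotient_conj_of_mem hinj hrange t n' y rfl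
    _ = n := (N.mk_eq_mk_of_isConj (isConj_iff.mpr ⟨h', rfl⟩)).symm

theorem commutator_le_ker_toQuotient (hT : ∀ g : G, ∃ t : T, (t : G)⁻¹ * g ∈ H ⊔ ncl H N) :
    (⁅(⊤ : Subgroup G), ncl H N⁆).subgroupOf (ncl H N) ≤ (toQuotient hinj hrange).ker := by
  refine commutator_subgroupOf_le_ker_s10 _ _ fun _ _ =>
    normalClosure_map_eq_of_isConj _ fun w w' hw hc => ?_
  obtain ⟨g, hg⟩ := isConj_iff.mp hc
  obtain ⟨n, hn, hnw⟩ := mem_map.mp hw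
  rw [toQuotient_conj hinj hrange hT 1 ⟨n, hn⟩ w (by rw [← hnw]; simp),
    toQuotient_conj hinj hrange hT g ⟨n, hn⟩ w' (by rw [← hg, ← hnw]; rfl)]

theorem toQuotient_toNormalClosure (hT : ∀ g : G, ∃ t : T, (t : G)⁻¹ * g ∈ H ⊔ ncl H N) (n : N) :
    toQuotient hinj hrange (toNormalClosure H N n) = n :=
  toQuotient_conj hinj hrange hT 1 n _ (by simp [toNormalClosure])

theorem ofQuotient_toQuotient (hT : ∀ g : G, ∃ t : T, (t : G)⁻¹ * g ∈ H ⊔ ncl H N)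
    (w : ncl H N) : ofQuotient H N (toQuotient hinj hrange w) = w := by
  suffices (ofQuotient H N).comp (toQuotient hinj hrange) = QuotientGroup.mk' _ from
    DFunLike.congr_fun this w
  refine normalClosure_hom_ext fun w hw => ?_
  obtain ⟨x, hx, hxw⟩ := Group.mem_conjugatesOfSet_iff.mp hw
  obtain ⟨g, hg⟩ := isConj_iff.mp hxw
  obtain ⟨n, hn, rfl⟩ := mem_map.mp hx
  rw [MonoidHom.comp_apply, toQuotient_conj hinj hrange hT g ⟨n, hn⟩ w hg.symm]
  exact (ncl H N).mk_eq_mk_of_isConj (isConj_iff.mpr ⟨g, hg⟩)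

noncomputable def quotientEquiv (hT : ∀ g : G, ∃ t : T, (t : G)⁻¹ * g ∈ H ⊔ ncl H N) :
    ncl H N ⧸ (⁅(⊤ : Subgroup G), ncl H N⁆).subgroupOf (ncl H N) ≃*
      N ⧸ (⁅(⊤ : Subgroup H), N⁆).subgroupOf N :=
  MonoidHom.toMulEquiv (QuotientGroup.lift _ _ (commutator_le_ker_toQuotient hinj hrange hT))
    (ofQuotient H N)
    (QuotientGroup.monoidHom_ext _ <| MonoidHom.ext <| ofQuotient_toQuotient hinj hrange hT)
    (QuotientGroup.monoidHom_ext _ <| MonoidHom.ext <| toQuotient_toNormalClosure hinj hrange hT)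

end CohenLyndon

/-- Under the Cohen–Lyndon property for `(G,H,N)`, the natural homomorphism
`⟪N⟫/[G,⟪N⟫] → N/[H,N]` sending (the class of) `tnt⁻¹` to the class of `n` for each `t` in
the transversal `T` is an isomorphism, whose inverse is induced by the inclusion `N → ⟪N⟫`. -/
theorem mulEquiv_of_cohenLyndon {G : Type*} [Group G] (H : Subgroup G)
    (N : Subgroup ↥H) [N.Normal]
    (T : Set G)
    (htrans : ∀ g : G, ∃! t : ↥T,
      (t : G)⁻¹ * g ∈ H ⊔ Subgroup.normalClosure ((Subgroup.map H.subtype N : Subgroup G) : Set G))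
    (hinj : Function.Injective
      (Monoid.CoprodI.lift (fun t : ↥T =>
        (Subgroup.map (MulAut.conj (t : G)).toMonoidHom
          (Subgroup.map H.subtype N)).subtype)))
    (hrange : (Monoid.CoprodI.lift (fun t : ↥T =>
        (Subgroup.map (MulAut.conj (t : G)).toMonoidHom
          (Subgroup.map H.subtype N)).subtype)).range
      = Subgroup.normalClosure ((Subgroup.map H.subtype N : Subgroup G) : Set G)) :
    ∃ e : (↥(Subgroup.normalClosure ((Subgroup.map H.subtype N : Subgroup G) : Set G)) ⧸
        ((⁅(⊤ : Subgroup G),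
            Subgroup.normalClosure ((Subgroup.map H.subtype N : Subgroup G) : Set G)⁆).subgroupOf
          (Subgroup.normalClosure ((Subgroup.map H.subtype N : Subgroup G) : Set G)))) ≃*
      (↥N ⧸ ((⁅(⊤ : Subgroup ↥H), N⁆).subgroupOf N)),
      (∀ t ∈ T, ∀ (n : ↥N)
        (x : ↥(Subgroup.normalClosure ((Subgroup.map H.subtype N : Subgroup G) : Set G))),
        (x : G) = t * (H.subtype n) * t⁻¹ → e (QuotientGroup.mk x) = QuotientGroup.mk n) ∧
      (∀ (n : ↥N)
        (x : ↥(Subgroup.normalClosure ((Subgroup.map H.subtype N : Subgroup G) : Set G))),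
        (x : G) = H.subtype n → e.symm (QuotientGroup.mk n) = QuotientGroup.mk x) := by
  have hT : ∀ g : G, ∃ t : T, (t : G)⁻¹ * g ∈ H ⊔ CohenLyndon.ncl H N := fun g => (htrans g).exists
  refine ⟨CohenLyndon.quotientEquiv hinj hrange hT, fun t _ n x hx => ?_, fun n x hx => ?_⟩
  · exact CohenLyndon.toQuotient_conj hinj hrange hT t n x hx
  · exact congrArg QuotientGroup.mk (Subtype.ext hx.symm)
end

section
/- Let f : G → H be a surjective homomorphism from a finitely generated group G to a finitely presented group H, with kernel N. Then the semidirect product N ⋊ G (G acting by conjugation), equivalently the fiber product G ×_H G, is finitely generated. -/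
def fiberProduct {G₁ G₂ H : Type*} [Group G₁] [Group G₂] [Group H]
    (f₁ : G₁ →* H) (f₂ : G₂ →* H) : Subgroup (G₁ × G₂) where
  carrier := {p | f₁ p.1 = f₂ p.2}
  one_mem' := by simp
  mul_mem' := by
    intro a b ha hb
    simp only [Set.mem_setOf_eq, Prod.fst_mul, Prod.snd_mul, map_mul] at *
    rw [ha, hb]
  inv_mem' := by
    intro a ha
    simp only [Set.mem_setOf_eq, Prod.fst_inv, Prod.snd_inv, map_inv] at *
    rw [ha]


/-- A group is finitely presented if it is the quotient of a finitely generated free group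
by the normal closure of a finite set of relators. -/
def Group.FinitelyPresented (G : Type*) [Group G] : Prop :=
  ∃ (n : ℕ) (f : FreeGroup (Fin n) →* G), Function.Surjective f ∧
    ∃ S : Finset (FreeGroup (Fin n)),
      Subgroup.normalClosure (S : Set (FreeGroup (Fin n))) = f.ker

open Subgroup

lemma exists_freeGroup_surjective (G : Type*) [Group G] [Group.FG G] :
    ∃ (m : ℕ) (g : FreeGroup (Fin m) →* G), Function.Surjective g := by
  obtain ⟨S, hS, hfin⟩ := Group.fg_iff.mp ‹Group.FG G›
  obtain ⟨n, e, he⟩ := hfin.fin_embedding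
  refine ⟨n, FreeGroup.lift (fun i => e i), ?_⟩
  rw [← MonoidHom.range_eq_top, FreeGroup.range_lift_eq_closure]
  rw [he, hS]

/-- Key lemma: the kernel of a surjection from a f.g. free group onto a finitely
presented group is the normal closure of a finite set. -/
lemma ker_eq_normalClosure_finite {H : Type*} [Group H] (hH : Group.FinitelyPresented H)
    {m : ℕ} (π₁ : FreeGroup (Fin m) →* H) (hπ₁ : Function.Surjective π₁) :
    ∃ T : Set (FreeGroup (Fin m)), T.Finite ∧ Subgroup.normalClosure T = π₁.ker := by
  obtain ⟨n, π, hπ, S, hS⟩ := hH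
  choose u hu using fun i : Fin n => hπ₁ (π (FreeGroup.of i))
  choose v hv using fun j : Fin m => hπ (π₁ (FreeGroup.of j))
  set φ : FreeGroup (Fin n) →* FreeGroup (Fin m) := FreeGroup.lift u with hφ
  set ψ : FreeGroup (Fin m) →* FreeGroup (Fin n) := FreeGroup.lift v with hψ
  have hπφ : π₁.comp φ = π := by
    apply FreeGroup.ext_hom; intro i
    simp [hφ, hu]
  have hπψ : π.comp ψ = π₁ := by
    apply FreeGroup.ext_hom; intro j
    simp [hψ, hv]
  set T : Set (FreeGroup (Fin m)) :=
    (φ '' (S : Set (FreeGroup (Fin n)))) ∪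
      (Set.range fun j : Fin m => (FreeGroup.of j)⁻¹ * φ (ψ (FreeGroup.of j))) with hT
  refine ⟨T, (S.finite_toSet.image φ).union (Set.finite_range _), ?_⟩
  apply le_antisymm
  · apply Subgroup.normalClosure_le_normal
    rintro x (⟨s, hs, rfl⟩ | ⟨j, rfl⟩)
    · have hsk : s ∈ π.ker := by rw [← hS]; exact Subgroup.subset_normalClosure hs
      have h : π₁ (φ s) = π s := by rw [← hπφ]; rfl
      rw [MonoidHom.mem_ker] at hsk
      simp only [SetLike.mem_coe, MonoidHom.mem_ker]
      rw [h, hsk]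
    · have h1 : π₁ (φ (ψ (FreeGroup.of j))) = π (ψ (FreeGroup.of j)) := by
        rw [← hπφ]; rfl
      have h2 : π (ψ (FreeGroup.of j)) = π₁ (FreeGroup.of j) := by
        rw [← hπψ]; rfl
      simp only [SetLike.mem_coe, MonoidHom.mem_ker, map_mul, map_inv, h1, h2, inv_mul_cancel]
  · intro w hw
    set M := Subgroup.normalClosure T with hM
    haveI : M.Normal := hM ▸ Subgroup.normalClosure_normal
    have hq : (QuotientGroup.mk' M).comp (φ.comp ψ) = QuotientGroup.mk' M := by
      apply FreeGroup.ext_hom; intro j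
      have hmem : (FreeGroup.of j)⁻¹ * φ (ψ (FreeGroup.of j)) ∈ M :=
        Subgroup.subset_normalClosure (Or.inr ⟨j, rfl⟩)
      have h3 : ((FreeGroup.of j : FreeGroup (Fin m)) : FreeGroup (Fin m) ⧸ M) =
          (φ (ψ (FreeGroup.of j)) : FreeGroup (Fin m) ⧸ M) := (QuotientGroup.eq (s := M)).mpr hmem
      simpa using h3.symm
    have hψw : ψ w ∈ Subgroup.normalClosure (S : Set (FreeGroup (Fin n))) := by
      rw [hS, MonoidHom.mem_ker]
      have h : π (ψ w) = π₁ w := by rw [← hπψ]; rfl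
      rw [h]; exact hw
    have hφψw : φ (ψ w) ∈ M := by
      have hle : Subgroup.normalClosure (S : Set (FreeGroup (Fin n))) ≤ M.comap φ := by
        have : (M.comap φ).Normal := Subgroup.Normal.comap inferInstance φ
        apply Subgroup.normalClosure_le_normal
        intro s hs
        exact Subgroup.subset_normalClosure (Or.inl ⟨s, hs, rfl⟩)
      exact hle hψw
    have heq : (QuotientGroup.mk' M) w = (QuotientGroup.mk' M) (φ (ψ w)) := by
      conv_lhs => rw [← hq]
      rfl
    have hker : w ∈ (QuotientGroup.mk' M).ker := by
      rw [MonoidHom.mem_ker, heq]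
      simpa using hφψw
    rwa [QuotientGroup.ker_mk'] at hker

/-- The kernel of a surjection from a f.g. group onto a finitely presented group is
the normal closure of a finite set. -/
lemma ker_eq_normalClosure_finite' {G H : Type*} [Group G] [Group H] [Group.FG G]
    (hH : Group.FinitelyPresented H) (f : G →* H) (hf : Function.Surjective f) :
    ∃ T : Set G, T.Finite ∧ Subgroup.normalClosure T = f.ker := by
  obtain ⟨m, g, hg⟩ := exists_freeGroup_surjective G
  obtain ⟨T, hTfin, hT⟩ := ker_eq_normalClosure_finite hH (f.comp g) (hf.comp hg)
  refine ⟨g '' T, hTfin.image g, ?_⟩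
  rw [← Subgroup.map_normalClosure T g hg, hT, ← MonoidHom.comap_ker,
    Subgroup.map_comap_eq_self_of_surjective hg]

/-- (Bass–Lubotzky) If `f : G → H` is a surjection from a finitely generated group `G` onto a
finitely presented group `H`, then the fiber product `G ×_H G` (equivalently `ker f ⋊ G`) is
finitely generated. -/
theorem fg_fiberProduct_of_fg_of_finitelyPresented {G H : Type*} [Group G] [Group H]
    [Group.FG G] (hH : Group.FinitelyPresented H)
    (f : G →* H) (hf : Function.Surjective f) :
    Group.FG ↥(fiberProduct f f) := by
  obtain ⟨X, hX, hXfin⟩ := Group.fg_iff.mp ‹Group.FG G›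
  obtain ⟨T, hTfin, hT⟩ := ker_eq_normalClosure_finite' hH f hf
  set Y : Set (G × G) := ((fun x => (x, x)) '' X) ∪ ((fun t => (t, 1)) '' T) with hY
  set K : Subgroup (G × G) := Subgroup.closure Y with hK
  -- every element of T lies in the kernel
  have hTker : ∀ t ∈ T, f t = 1 := by
    intro t ht
    have : t ∈ f.ker := hT ▸ Subgroup.subset_normalClosure ht
    rwa [MonoidHom.mem_ker] at this
  -- the diagonal is in K
  have hdiag : ∀ g : G, ((g, g) : G × G) ∈ K := by
    have h1 : Subgroup.closure X ≤ K.comap ((MonoidHom.id G).prod (MonoidHom.id G)) := by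
      apply Subgroup.closure_le _ |>.mpr
      intro x hx
      exact Subgroup.subset_closure (Or.inl ⟨x, hx, rfl⟩)
    intro g
    have : g ∈ Subgroup.closure X := hX ▸ Subgroup.mem_top g
    exact h1 this
  -- the subgroup {n | (n,1) ∈ K} of G
  set Q : Subgroup G := (K.comap ((MonoidHom.id G).prod (1 : G →* G))) with hQ
  have hQmem : ∀ n : G, n ∈ Q ↔ ((n, 1) : G × G) ∈ K := by
    intro n; rfl
  have hQnormal : Q.Normal := by
    constructor
    intro n hn g
    rw [hQmem] at hn ⊢
    have : ((g, g) : G × G) * (n, 1) * (g, g)⁻¹ ∈ K :=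
      K.mul_mem (K.mul_mem (hdiag g) hn) (K.inv_mem (hdiag g))
    simpa using this
  have hNQ : f.ker ≤ Q := by
    rw [← hT]
    apply Subgroup.normalClosure_le_normal
    intro t ht
    rw [SetLike.mem_coe, hQmem]
    exact Subgroup.subset_closure (Or.inr ⟨t, ht, rfl⟩)
  -- K equals the fiber product
  have hKeq : K = fiberProduct f f := by
    apply le_antisymm
    · apply Subgroup.closure_le _ |>.mpr
      rintro p (⟨x, hx, rfl⟩ | ⟨t, ht, rfl⟩)
      · show f x = f x; rfl
      · show f t = f 1; rw [hTker t ht, map_one]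
    · rintro ⟨a, b⟩ hab
      have hab' : f a = f b := hab
      have hmem : a * b⁻¹ ∈ f.ker := by
        rw [MonoidHom.mem_ker, map_mul, map_inv, hab', mul_inv_cancel]
      have h1 : ((a * b⁻¹, 1) : G × G) ∈ K := (hQmem _).mp (hNQ hmem)
      have h2 : ((b, b) : G × G) ∈ K := hdiag b
      have : ((a * b⁻¹, 1) : G × G) * (b, b) ∈ K := K.mul_mem h1 h2
      simpa using this
  rw [Group.fg_iff_subgroup_fg, ← hKeq, hK, Subgroup.fg_iff]
  exact ⟨Y, rfl, (hXfin.image _).union (hTfin.image _)⟩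
end

section
/- Let G₁ and G₂ be finitely presented groups and f₁ : G₁ → H, f₂ : G₂ → H surjective homomorphisms onto a group H that is not finitely presented. Then the fiber product G₁ ×_H G₂ is not finitely generated. -/
/-- Image of a normal closure is contained in the normal closure of the image. -/
lemma map_normalClosure_le {G N : Type*} [Group G] [Group N] (f : G →* N) (s : Set G) :
    (Subgroup.normalClosure s).map f ≤ Subgroup.normalClosure (f '' s) := by
  rw [Subgroup.map_le_iff_le_comap]
  refine Subgroup.normalClosure_le_normal ?_
  intro x hx
  exact Subgroup.subset_normalClosure ⟨x, hx, rfl⟩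

/-- Tietze: if `G` is finitely presented, then any surjection from a finitely generated
free group onto `G` has finitely normally generated kernel. -/
lemma tietze {G : Type*} [Group G] (hG : Group.FinitelyPresented G) {m : ℕ}
    (φ : FreeGroup (Fin m) →* G) (hφ : Function.Surjective φ) :
    ∃ S : Finset (FreeGroup (Fin m)),
      Subgroup.normalClosure (S : Set (FreeGroup (Fin m))) = φ.ker := by
  obtain ⟨n, ψ, hψ, R, hR⟩ := hG
  choose a ha using fun i : Fin n => hφ (ψ (FreeGroup.of i))
  choose b hb using fun j : Fin m => hψ (φ (FreeGroup.of j))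
  set α : FreeGroup (Fin n) →* FreeGroup (Fin m) := FreeGroup.lift a with hαdef
  set β : FreeGroup (Fin m) →* FreeGroup (Fin n) := FreeGroup.lift b with hβdef
  have hα : ∀ w, φ (α w) = ψ w := by
    intro w
    have : φ.comp α = ψ := FreeGroup.ext_hom _ _ (by simp [hαdef, ha])
    exact DFunLike.congr_fun this w
  have hβ : ∀ w, ψ (β w) = φ w := by
    intro w
    have : ψ.comp β = φ := FreeGroup.ext_hom _ _ (by simp [hβdef, hb])
    exact DFunLike.congr_fun this w
  refine ⟨R.image α ∪ (Finset.univ.image fun j : Fin m =>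
      (α (β (FreeGroup.of j)))⁻¹ * FreeGroup.of j), ?_⟩
  set T : Finset (FreeGroup (Fin m)) := R.image α ∪ (Finset.univ.image fun j : Fin m =>
      (α (β (FreeGroup.of j)))⁻¹ * FreeGroup.of j) with hT
  set N := Subgroup.normalClosure (T : Set (FreeGroup (Fin m))) with hN
  apply le_antisymm
  · refine Subgroup.normalClosure_le_normal ?_
    intro x hx
    simp only [hT, Finset.coe_union, Set.mem_union, Finset.coe_image, Set.mem_image,
      Finset.mem_coe, Finset.coe_univ, Set.mem_univ, true_and] at hx
    rcases hx with ⟨r, hr, rfl⟩ | ⟨j, rfl⟩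
    · have : ψ r = 1 := by
        have : r ∈ ψ.ker := hR ▸ Subgroup.subset_normalClosure hr
        exact this
      simp [MonoidHom.mem_ker, hα, this]
    · simp [MonoidHom.mem_ker, hα, hβ]
  · intro w hw
    have hwker : φ w = 1 := hw
    have key : ∀ x, (QuotientGroup.mk (α (β x)) : FreeGroup (Fin m) ⧸ N) =
        QuotientGroup.mk x := by
      intro x
      have heq : (QuotientGroup.mk' N).comp (α.comp β) = QuotientGroup.mk' N := by
        refine FreeGroup.ext_hom _ _ ?_
        intro j
        simp only [MonoidHom.comp_apply, QuotientGroup.mk'_apply]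
        refine QuotientGroup.eq.mpr ?_
        refine Subgroup.subset_normalClosure ?_
        simp only [hT, Finset.coe_union, Set.mem_union, Finset.coe_image, Finset.coe_univ,
          Set.image_univ, Set.mem_range]
        exact Or.inr ⟨j, rfl⟩
      exact DFunLike.congr_fun heq x
    have hβw : β w ∈ ψ.ker := by
      simp [MonoidHom.mem_ker, hβ, hwker]
    have hβw' : β w ∈ Subgroup.normalClosure (R : Set (FreeGroup (Fin n))) := hR ▸ hβw
    have h2 : α (β w) ∈ N := by
      have : α (β w) ∈ (Subgroup.normalClosure (R : Set (FreeGroup (Fin n)))).map α :=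
        ⟨β w, hβw', rfl⟩
      have h3 := map_normalClosure_le α (R : Set (FreeGroup (Fin n))) this
      refine Subgroup.normalClosure_le_normal ?_ h3
      refine Set.Subset.trans ?_ Subgroup.subset_normalClosure
      intro x hx
      obtain ⟨r, hr, rfl⟩ := hx
      simp only [hT, Finset.coe_union, Set.mem_union, Finset.coe_image]
      exact Or.inl ⟨r, hr, rfl⟩
    have h1 : (α (β w))⁻¹ * w ∈ N := QuotientGroup.eq.mp (key w)
    have : α (β w) * ((α (β w))⁻¹ * w) ∈ N := mul_mem h2 h1
    simpa using this

/-- If `G` is finitely presented and `π : G → H` is surjective with finitely normally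
generated kernel, then `H` is finitely presented. -/
lemma fp_of_quotient {G H : Type*} [Group G] [Group H] (hG : Group.FinitelyPresented G)
    (π : G →* H) (hπ : Function.Surjective π) (T : Finset G)
    (hT : Subgroup.normalClosure (T : Set G) = π.ker) : Group.FinitelyPresented H := by
  classical
  obtain ⟨n, ψ, hψ, R, hR⟩ := hG
  set t : G → FreeGroup (Fin n) := Function.surjInv hψ with htdef
  have ht : ∀ g, ψ (t g) = g := fun g => Function.surjInv_eq hψ g
  refine ⟨n, π.comp ψ, hπ.comp hψ, R ∪ T.image t, ?_⟩
  have himg : ψ '' ((T.image t : Finset (FreeGroup (Fin n))) : Set (FreeGroup (Fin n)))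
      = (T : Set G) := by
    ext g
    simp only [Finset.coe_image, Set.mem_image, Finset.mem_coe]
    constructor
    · rintro ⟨_, ⟨x, hx, rfl⟩, rfl⟩
      rw [ht]; exact hx
    · intro hg
      exact ⟨t g, ⟨g, hg, rfl⟩, ht g⟩
  apply le_antisymm
  · refine Subgroup.normalClosure_le_normal ?_
    intro x hx
    simp only [Finset.coe_union, Set.mem_union, Finset.coe_image, Set.mem_image,
      Finset.mem_coe] at hx
    rcases hx with hr | ⟨g, hg, rfl⟩
    · have h1 : x ∈ ψ.ker := hR ▸ Subgroup.subset_normalClosure hr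
      have h1' : ψ x = 1 := h1
      simp [MonoidHom.mem_ker, h1']
    · have h1 : g ∈ π.ker := hT ▸ Subgroup.subset_normalClosure hg
      have h1' : π g = 1 := h1
      simp [MonoidHom.mem_ker, ht, h1']
  · intro w hw
    have hw' : π (ψ w) = 1 := hw
    have : ψ w ∈ Subgroup.normalClosure (T : Set G) := hT ▸ hw'
    rw [← himg, ← Subgroup.map_normalClosure _ ψ hψ] at this
    obtain ⟨u, hu, huw⟩ := this
    have hker : u⁻¹ * w ∈ ψ.ker := by
      simp [MonoidHom.mem_ker, map_mul, huw]
    have hker' : u⁻¹ * w ∈ Subgroup.normalClosure (R : Set (FreeGroup (Fin n))) := hR ▸ hker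
    have hsub : Subgroup.normalClosure (R : Set (FreeGroup (Fin n))) ≤
        Subgroup.normalClosure ((R ∪ T.image t : Finset (FreeGroup (Fin n))) :
          Set (FreeGroup (Fin n))) := by
      refine Subgroup.normalClosure_mono ?_
      simp [Finset.coe_union]
    have hsub' : Subgroup.normalClosure (((T.image t : Finset (FreeGroup (Fin n)))) :
        Set (FreeGroup (Fin n))) ≤
        Subgroup.normalClosure ((R ∪ T.image t : Finset (FreeGroup (Fin n))) :
          Set (FreeGroup (Fin n))) := by
      refine Subgroup.normalClosure_mono ?_
      simp [Finset.coe_union]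
    have : u * (u⁻¹ * w) ∈ _ := mul_mem (hsub' hu) (hsub hker')
    simpa using this

/-- If `G₁, G₂` are finitely presented and `f₁ : G₁ → H`, `f₂ : G₂ → H` are surjections onto
a group `H` that is not finitely presented, then `G₁ ×_H G₂` is not finitely generated. -/
theorem not_fg_fiberProduct_of_not_finitelyPresented {G₁ G₂ H : Type*}
    [Group G₁] [Group G₂] [Group H]
    (hG₁ : Group.FinitelyPresented G₁) (hG₂ : Group.FinitelyPresented G₂)
    (hH : ¬ Group.FinitelyPresented H)
    (f₁ : G₁ →* H) (f₂ : G₂ →* H)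
    (hf₁ : Function.Surjective f₁) (hf₂ : Function.Surjective f₂) :
    ¬ Group.FG ↥(fiberProduct f₁ f₂) := by
  classical
  intro hfg
  apply hH
  set P := fiberProduct f₁ f₂ with hP
  -- get a surjection from a f.g. free group onto P
  obtain ⟨m, S, hScard, hS⟩ := Group.fg_iff'.mp hfg
  set φ : FreeGroup (Fin S.card) →* P :=
    FreeGroup.lift (fun i => (S.equivFin.symm i : P)) with hφdef
  have hφ : Function.Surjective φ := by
    rw [← MonoidHom.range_eq_top]
    rw [hφdef, FreeGroup.range_lift_eq_closure]
    have : Set.range (fun i => ((S.equivFin.symm i : S) : P)) = (S : Set P) := by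
      ext x
      constructor
      · rintro ⟨i, rfl⟩; exact (S.equivFin.symm i).2
      · intro hx; exact ⟨S.equivFin ⟨x, hx⟩, by simp⟩
    rw [this, hS]
  -- projections
  set p₁ : P →* G₁ := (MonoidHom.fst G₁ G₂).comp P.subtype with hp₁
  set p₂ : P →* G₂ := (MonoidHom.snd G₁ G₂).comp P.subtype with hp₂
  have hp₁surj : Function.Surjective p₁ := by
    intro g₁
    obtain ⟨g₂, hg₂⟩ := hf₂ (f₁ g₁)
    exact ⟨⟨(g₁, g₂), hg₂.symm⟩, rfl⟩
  have hcomm : ∀ x : P, f₁ (p₁ x) = f₂ (p₂ x) := fun x => x.2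
  set ψ₁ : FreeGroup (Fin S.card) →* G₁ := p₁.comp φ with hψ₁
  set ψ₂ : FreeGroup (Fin S.card) →* G₂ := p₂.comp φ with hψ₂
  have hψ₁surj : Function.Surjective ψ₁ := hp₁surj.comp hφ
  have hcomm' : ∀ w, f₁ (ψ₁ w) = f₂ (ψ₂ w) := fun w => hcomm (φ w)
  obtain ⟨R, hR⟩ := tietze hG₁ ψ₁ hψ₁surj
  -- ker f₂ is the normal closure of ψ₂ '' R
  have hker : Subgroup.normalClosure ((R.image ψ₂ : Finset G₂) : Set G₂) = f₂.ker := by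
    apply le_antisymm
    · refine Subgroup.normalClosure_le_normal ?_
      intro x hx
      simp only [Finset.coe_image, Set.mem_image, Finset.mem_coe] at hx
      obtain ⟨r, hr, rfl⟩ := hx
      have h0 : r ∈ ψ₁.ker := hR ▸ Subgroup.subset_normalClosure hr
      have h1 : ψ₁ r = 1 := h0
      have := hcomm' r
      rw [h1, map_one] at this
      exact MonoidHom.mem_ker.mpr this.symm
    · intro k hk
      have hk1 : f₂ k = 1 := hk
      have hmem : ((1 : G₁), k) ∈ P := by
        show f₁ 1 = f₂ k
        rw [map_one, hk1]
      obtain ⟨w, hw⟩ := hφ ⟨((1 : G₁), k), hmem⟩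
      have hw1 : ψ₁ w = 1 := by
        rw [hψ₁, MonoidHom.comp_apply, hw]
        rfl
      have hwR : w ∈ Subgroup.normalClosure (R : Set (FreeGroup (Fin S.card))) :=
        hR ▸ MonoidHom.mem_ker.mpr hw1
      have hw2 : ψ₂ w = k := by
        rw [hψ₂, MonoidHom.comp_apply, hw]
        rfl
      have : k ∈ (Subgroup.normalClosure (R : Set (FreeGroup (Fin S.card)))).map ψ₂ :=
        ⟨w, hwR, hw2⟩
      have h3 := map_normalClosure_le ψ₂ _ this
      refine Subgroup.normalClosure_le_normal ?_ h3
      refine Set.Subset.trans ?_ Subgroup.subset_normalClosure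
      intro x hx
      obtain ⟨r, hr, rfl⟩ := hx
      exact Finset.mem_coe.mpr (Finset.mem_image_of_mem _ (Finset.mem_coe.mp hr))
  exact fp_of_quotient hG₂ f₂ hf₂ (R.image ψ₂) hker
end
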